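/- Let L > 0 and consider f : ℝ → ℝ, f(x) = (L/2)x². For any x_0 ∈ ℝ, any N ≥ 1, and any stepsizes h = (h_0, …, h_{N−1}), the gradient descent iterates x_{i+1} = x_i − (h_i/L) f′(x_i) satisfy x_N = (Π_{i=0}^{N−1} (1 − h_i)) x_0. In particular, for k ≥ 1, N = 2^k − 1 and h = h_right^(k), the bound of the main theorem holds with equality: f(x_N) − min f = (L/2)x_0² / r_k. -/

import Mathlib

open Finset

/-- The silver ratio ρ = 1 + √2. -/
noncomputable def rho : ℝ := 1 + Real.sqrt 2

/-- Entry `i` of the silver stepsize schedule π^(k) ∈ ℝ^(2^k − 1) (0-indexed):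
π^(1) = [√2], π^(k+1) = [π^(k), β_k, π^(k)] where β_k = 1 + ρ^(k−1). -/
noncomputable def piSilver : ℕ → ℕ → ℝ
  | 0, _ => 0
  | 1, _ => Real.sqrt 2
  | k + 2, i =>
      if i < 2 ^ (k + 1) - 1 then piSilver (k + 1) i
      else if i = 2 ^ (k + 1) - 1 then 1 + rho ^ k
      else piSilver (k + 1) (i - 2 ^ (k + 1))

/-- The sequence r_k: r_1 = 4, r_{k+1} = (r_k + 4ρ^k + √(r_k(r_k + 8ρ^k)))/2. -/
noncomputable def rseq : ℕ → ℝ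
  | 0 => 0
  | 1 => 4
  | k + 2 =>
      (rseq (k + 1) + 4 * rho ^ (k + 1)
        + Real.sqrt (rseq (k + 1) * (rseq (k + 1) + 8 * rho ^ (k + 1)))) / 2

/-- α_k = 1 + (√(r_k(r_k + 8ρ^k)) − r_k)/4. -/
noncomputable def alphaSeq (k : ℕ) : ℝ :=
  1 + (Real.sqrt (rseq k * (rseq k + 8 * rho ^ k)) - rseq k) / 4

/-- Entry `i` of h_right^(k) ∈ ℝ^(2^k − 1) (0-indexed):
h_right^(1) = [3/2], h_right^(k+1) = [π^(k), α_k, h_right^(k)]. -/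
noncomputable def hright : ℕ → ℕ → ℝ
  | 0, _ => 0
  | 1, _ => 3 / 2
  | k + 2, i =>
      if i < 2 ^ (k + 1) - 1 then piSilver (k + 1) i
      else if i = 2 ^ (k + 1) - 1 then alphaSeq (k + 1)
      else hright (k + 1) (i - 2 ^ (k + 1))

/-- h_left^(k) is h_right^(k) with its entries reversed. -/
noncomputable def hleft (k i : ℕ) : ℝ := hright k (2 ^ k - 2 - i)

/-! On `f(x) = (L/2)x²` a gradient step with stepsize `h` multiplies the iterate by `1 - h`, so
`x_N = Q x_0` with `Q = ∏ (1 - h_i)` and the claim becomes `Q² r_k = 1` for `h = h_right^(k)`.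
The recursive structure of the schedules splits `Q` into the product over `π^(k)`, the factor
`1 - α_k`, and the product over `h_right^(k)`. The silver product is `-ρ^(-k)` by induction, and
`α_k` is precisely the root of `(1 - α_k)² r_{k+1} = ρ^(2k) r_k`, which propagates `Q² r = 1`. -/

lemma rho_pos : 0 < rho := by
  unfold rho
  positivity

lemma rseq_succ_pos (k : ℕ) : 0 < rseq (k + 1) := by
  induction k with
  | zero => norm_num [rseq]
  | succ k ih =>
    rw [rseq]
    have := rho_pos
    positivity

lemma deriv_half_mul_sq (L t : ℝ) : deriv (fun y : ℝ => L / 2 * y ^ 2) t = L * t := by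
  rw [((hasDerivAt_pow 2 t).const_mul (L / 2)).deriv]
  ring

lemma eq_prod_mul_of_forall_lt {M : Type*} [CommMonoid M] {x c : ℕ → M} {N : ℕ}
    (hx : ∀ i < N, x (i + 1) = c i * x i) : x N = (∏ i ∈ range N, c i) * x 0 := by
  induction N with
  | zero => simp
  | succ n ih =>
    rw [hx n n.lt_succ_self, ih fun i hi => hx i (hi.trans n.lt_succ_self), prod_range_succ]
    ac_rfl

lemma gradientDescent_half_mul_sq_eq_prod {L : ℝ} (hL : L ≠ 0) {h x : ℕ → ℝ} {N : ℕ}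
    (hx : ∀ i < N, x (i + 1) = x i - (h i / L) * deriv (fun y : ℝ => L / 2 * y ^ 2) (x i)) :
    x N = (∏ i ∈ range N, (1 - h i)) * x 0 := by
  refine eq_prod_mul_of_forall_lt fun i hi => ?_
  rw [hx i hi, deriv_half_mul_sq]
  field_simp

lemma prod_range_two_pow_succ_sub_one {M : Type*} [CommMonoid M] (k : ℕ) (f : ℕ → M) :
    ∏ i ∈ range (2 ^ (k + 1) - 1), f i =
      (∏ i ∈ range (2 ^ k - 1), f i) * f (2 ^ k - 1) * ∏ i ∈ range (2 ^ k - 1), f (2 ^ k + i) := by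
  have hk : 1 ≤ 2 ^ k := Nat.one_le_two_pow
  have hsplit : 2 ^ (k + 1) - 1 = (2 ^ k - 1 + 1) + (2 ^ k - 1) := by rw [pow_succ]; omega
  rw [hsplit, prod_range_add, prod_range_succ, Nat.sub_add_cancel hk]

section Unfolding

variable {k i : ℕ}

lemma piSilver_of_lt (hi : i < 2 ^ (k + 1) - 1) : piSilver (k + 2) i = piSilver (k + 1) i := by
  rw [piSilver, if_pos hi]

lemma piSilver_two_pow_sub_one : piSilver (k + 2) (2 ^ (k + 1) - 1) = 1 + rho ^ k := by
  rw [piSilver, if_neg (lt_irrefl _), if_pos rfl]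

lemma piSilver_two_pow_add : piSilver (k + 2) (2 ^ (k + 1) + i) = piSilver (k + 1) i := by
  have := @Nat.one_le_two_pow k
  rw [piSilver, if_neg (by omega), if_neg (by omega), Nat.add_sub_cancel_left]

lemma hright_of_lt (hi : i < 2 ^ (k + 1) - 1) : hright (k + 2) i = piSilver (k + 1) i := by
  rw [hright, if_pos hi]

lemma hright_two_pow_sub_one : hright (k + 2) (2 ^ (k + 1) - 1) = alphaSeq (k + 1) := by
  rw [hright, if_neg (lt_irrefl _), if_pos rfl]

lemma hright_two_pow_add : hright (k + 2) (2 ^ (k + 1) + i) = hright (k + 1) i := by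
  have := @Nat.one_le_two_pow k
  rw [hright, if_neg (by omega), if_neg (by omega), Nat.add_sub_cancel_left]

end Unfolding

lemma prod_one_sub_piSilver (k : ℕ) :
    ∏ i ∈ range (2 ^ (k + 1) - 1), (1 - piSilver (k + 1) i) = -(rho ^ (k + 1))⁻¹ := by
  have hρ : rho ≠ 0 := rho_pos.ne'
  induction k with
  | zero =>
    have h2 : Real.sqrt 2 ^ 2 = 2 := Real.sq_sqrt zero_le_two
    norm_num [piSilver]
    field_simp
    unfold rho
    linear_combination -h2
  | succ k ih =>
    rw [prod_range_two_pow_succ_sub_one, piSilver_two_pow_sub_one,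
      prod_congr rfl fun i hi => by rw [piSilver_of_lt (mem_range.mp hi)]]
    simp only [piSilver_two_pow_add]
    rw [ih]
    field_simp
    ring

lemma one_sub_alphaSeq_sq_mul_rseq (k : ℕ) :
    (1 - alphaSeq (k + 1)) ^ 2 * rseq (k + 2) = (rho ^ (k + 1)) ^ 2 * rseq (k + 1) := by
  rw [alphaSeq, rseq]
  set r := rseq (k + 1)
  set p := rho ^ (k + 1)
  have hr : 0 < r := rseq_succ_pos k
  have hp : 0 < p := pow_pos rho_pos _
  have ht := Real.sq_sqrt (show 0 ≤ r * (r + 8 * p) by positivity)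
  linear_combination ((Real.sqrt (r * (r + 8 * p)) + 4 * p - r) / 32) * ht

lemma prod_one_sub_hright_sq_mul_rseq (k : ℕ) :
    (∏ i ∈ range (2 ^ (k + 1) - 1), (1 - hright (k + 1) i)) ^ 2 * rseq (k + 1) = 1 := by
  induction k with
  | zero => norm_num [hright, rseq]
  | succ k ih =>
    rw [prod_range_two_pow_succ_sub_one, hright_two_pow_sub_one,
      prod_congr rfl fun i hi => by rw [hright_of_lt (mem_range.mp hi)], prod_one_sub_piSilver]
    simp only [hright_two_pow_add]
    have hp : rho ^ (k + 1) ≠ 0 := pow_ne_zero _ rho_pos.ne'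
    calc _ = ((1 - alphaSeq (k + 1)) ^ 2 * rseq (k + 2)) / (rho ^ (k + 1)) ^ 2 *
          (∏ i ∈ range (2 ^ (k + 1) - 1), (1 - hright (k + 1) i)) ^ 2 := by ring
      _ = 1 := by
        rw [one_sub_alphaSeq_sq_mul_rseq, mul_div_cancel_left₀ _ (pow_ne_zero 2 hp), mul_comm, ih]

/-- **Tightness on quadratics (objective gap).** For `f(x) = (L/2)x²`, gradient descent
iterates satisfy `x_N = (Π_{i<N} (1 − h_i)) x_0`; in particular, with `h = h_right^(k)`
and `N = 2^k − 1`, the main bound holds with equality: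
`f(x_N) − min f = (L/2)x_0²/r_k` (the minimizer is `x⋆ = 0` with `min f = f(0) = 0`). -/
theorem quadratic_tightness_hright (L : ℝ) (hL : 0 < L) :
    (∀ (x0 : ℝ) (N : ℕ) (h : ℕ → ℝ) (x : ℕ → ℝ),
      x 0 = x0 →
      (∀ i < N, x (i + 1) = x i - (h i / L) * deriv (fun y : ℝ => L / 2 * y ^ 2) (x i)) →
      x N = (∏ i ∈ Finset.range N, (1 - h i)) * x0) ∧
    (∀ (k : ℕ), 1 ≤ k → ∀ (x0 : ℝ) (x : ℕ → ℝ),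
      x 0 = x0 →
      (∀ i < 2 ^ k - 1,
        x (i + 1) = x i - (hright k i / L) * deriv (fun y : ℝ => L / 2 * y ^ 2) (x i)) →
      (L / 2 * (x (2 ^ k - 1)) ^ 2) - (L / 2 * (0 : ℝ) ^ 2) = (L / 2) * x0 ^ 2 / rseq k) := by
  refine ⟨fun x0 N h x hx0 hx => hx0 ▸ gradientDescent_half_mul_sq_eq_prod hL.ne' hx, ?_⟩
  rintro (_ | k) hk x0 x rfl hx
  · omega
  rw [gradientDescent_half_mul_sq_eq_prod hL.ne' hx]
  have hQ := prod_one_sub_hright_sq_mul_rseq k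
  have hr := (rseq_succ_pos k).ne'
  rw [eq_div_iff hr]
  linear_combination L / 2 * x 0 ^ 2 * hQ
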